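/- Let s > 0, let {a_k}_{k=N}^{M} be non-negative reals and {b_k}_{k=N}^{M} a non-decreasing sequence of non-negative reals (with b_N := lim_{k→−∞} b_k when N = −∞). Then ∑_{k=N}^{M} a_k (∑_{i=k}^{M} a_i)^{s} b_k is comparable, with constants depending only on s, to ∑_{k=N+1}^{M} (b_k − b_{k−1}) (∑_{i=k}^{M} a_i)^{s+1} + (∑_{k=N}^{M} a_k)^{s+1} b_N. -/

import Mathlib

open scoped ENNReal

/-!
Write `Tₖ = ∑_{i ≥ k} aᵢ` and `Gⱼ = ∑_{k ≥ j} aₖ Tₖ^s`. Summation by parts,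
`bₖ = inf b + ∑_{j ≤ k} (bⱼ - bⱼ₋₁)`, turns the left-hand side into
`inf b · ∑ₖ aₖ Tₖ^s + ∑ⱼ (bⱼ - bⱼ₋₁) Gⱼ`. The power rule `Gⱼ ≤ Tⱼ^(s+1) ≤ (s+1) Gⱼ`, and its
analogue for the full sum, then compare this term by term with the right-hand side. The lower
half of the power rule is the tangent-line bound `(x+y)^(s+1) ≤ x^(s+1) + (s+1) y (x+y)^s` for
the convex function `x^(s+1)`, telescoped over finite partial sums.
-/

theorem Real.add_rpow_le_rpow_add_mul {x y s : ℝ} (hx : 0 ≤ x) (hy : 0 ≤ y) (hs : 0 ≤ s) :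
    (x + y) ^ (s + 1) ≤ x ^ (s + 1) + (s + 1) * y * (x + y) ^ s := by
  rcases (add_nonneg hx hy).eq_or_lt with hu | hu
  · have hx0 : x = 0 := by linarith
    have hy0 : y = 0 := by linarith
    simp [hx0, hy0]
  -- Bernoulli's inequality at `x / (x + y) = 1 - y / (x + y)`, rescaled by `(x + y) ^ (s + 1)`
  have key := one_add_mul_self_le_rpow_one_add (s := -(y / (x + y)))
    (by rw [neg_le_neg_iff, div_le_one hu]; linarith) (p := s + 1) (by linarith)
  have hxu : 1 + -(y / (x + y)) = x / (x + y) := by field_simp; ring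
  rw [hxu, Real.div_rpow hx hu.le, le_div_iff₀ (by positivity)] at key
  have hpow : (x + y) ^ (s + 1) = (x + y) * (x + y) ^ s := by
    rw [Real.rpow_add_one hu.ne']; ring
  rw [hpow] at key ⊢
  have : (1 + (s + 1) * -(y / (x + y))) * ((x + y) * (x + y) ^ s)
      = (x + y) * (x + y) ^ s - (s + 1) * y * (x + y) ^ s := by field_simp; ring
  linarith

theorem ENNReal.add_rpow_le_rpow_add_mul (x y : ℝ≥0∞) {s : ℝ} (hs : 0 ≤ s) :
    (x + y) ^ (s + 1) ≤ x ^ (s + 1) + ENNReal.ofReal (s + 1) * y * (x + y) ^ s := by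
  have hp : 0 < s + 1 := by linarith
  induction x using ENNReal.recTopCoe with
  | top => simp [ENNReal.top_rpow_of_pos hp]
  | coe x =>
    induction y using ENNReal.recTopCoe with
    | top =>
      have hc : ENNReal.ofReal (s + 1) ≠ 0 := (ENNReal.ofReal_pos.2 hp).ne'
      have : (⊤ : ℝ≥0∞) ^ s ≠ 0 := by simp [ENNReal.rpow_eq_zero_iff, hs]
      simp [ENNReal.mul_top hc, ENNReal.top_mul this]
    | coe y =>
      rw [← ENNReal.coe_add, ← ENNReal.coe_rpow_of_nonneg _ hp.le,
        ← ENNReal.coe_rpow_of_nonneg _ hp.le, ← ENNReal.coe_rpow_of_nonneg _ hs, ENNReal.ofReal]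
      norm_cast
      rw [← NNReal.coe_le_coe]
      push_cast
      rw [Real.coe_toNNReal _ hp.le]
      exact Real.add_rpow_le_rpow_add_mul x.2 y.2 hs

theorem Finset.rpow_sum_le_mul_sum_mul_rpow_tail {α : Type*} [LinearOrder α] (t : Finset α)
    (a : α → ℝ≥0∞) {s : ℝ} (hs : 0 ≤ s) :
    (∑ i ∈ t, a i) ^ (s + 1) ≤
      ENNReal.ofReal (s + 1) * ∑ k ∈ t, a k * (∑ i ∈ t with k ≤ i, a i) ^ s := by
  classical
  induction t using Finset.induction_on_min with
  | empty => simp [ENNReal.zero_rpow_of_pos (by linarith : 0 < s + 1)]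
  | insert m t hm ih =>
    have hmt : m ∉ t := fun h => lt_irrefl m (hm m h)
    have htail (k) (hk : k ∈ t) :
        ∑ i ∈ insert m t with k ≤ i, a i = ∑ i ∈ t with k ≤ i, a i := by
      rw [Finset.filter_insert, if_neg (hm k hk).not_ge]
    have hhead : ∑ i ∈ insert m t with m ≤ i, a i = ∑ i ∈ t, a i + a m := by
      rw [Finset.filter_true_of_mem fun i hi => ?_, Finset.sum_insert hmt, add_comm]
      rcases Finset.mem_insert.1 hi with rfl | hi
      exacts [le_rfl, (hm i hi).le]
    rw [Finset.sum_insert hmt, Finset.sum_insert hmt, hhead,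
      Finset.sum_congr rfl fun k hk => congrArg (fun x => a k * x ^ s) (htail k hk), add_comm (a m)]
    calc (∑ i ∈ t, a i + a m) ^ (s + 1)
        ≤ (∑ i ∈ t, a i) ^ (s + 1) +
            ENNReal.ofReal (s + 1) * a m * (∑ i ∈ t, a i + a m) ^ s :=
          ENNReal.add_rpow_le_rpow_add_mul _ _ hs
      _ ≤ ENNReal.ofReal (s + 1) * ∑ k ∈ t, a k * (∑ i ∈ t with k ≤ i, a i) ^ s
          + ENNReal.ofReal (s + 1) * a m * (∑ i ∈ t, a i + a m) ^ s := by gcongr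
      _ = _ := by ring

section TailSum

variable {α : Type*} [LinearOrder α] (U : Set α) (a : α → ℝ≥0∞) {s : ℝ}

noncomputable def tailSum (k : α) : ℝ≥0∞ := ∑' i : {i // i ∈ U ∧ k ≤ i}, a i

theorem sum_filter_le_tailSum (t : Finset U) (k : U) :
    ∑ i ∈ t with k ≤ i, a i ≤ tailSum U a k :=
  calc ∑ i ∈ t with k ≤ i, a i = ∑ i ∈ t.subtype (k ≤ ·), a i.1 :=
        (Finset.sum_subtype_eq_sum_filter ..).symm
    _ ≤ ∑' i : {i : U // k ≤ i}, a i.1 := ENNReal.sum_le_tsum _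
    _ = tailSum U a k :=
        (Equiv.subtypeSubtypeEquivSubtypeInter (· ∈ U) (k.1 ≤ ·)).tsum_eq (fun i => a i.1)

theorem tailSum_le_tsum (k : α) : tailSum U a k ≤ ∑' i : U, a i :=
  ENNReal.tsum_mono_subtype a fun _ hi => hi.1

theorem tsum_mul_tailSum_rpow_le (hs : 0 ≤ s) :
    ∑' k : U, a k * tailSum U a k ^ s ≤ (∑' i : U, a i) ^ (s + 1) :=
  calc ∑' k : U, a k * tailSum U a k ^ s ≤ ∑' k : U, a k * (∑' i : U, a i) ^ s := by
        gcongr with k; exact tailSum_le_tsum U a k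
    _ = (∑' i : U, a i) ^ (s + 1) := by
        rw [ENNReal.tsum_mul_right, ENNReal.rpow_add_of_nonneg _ _ hs zero_le_one,
          ENNReal.rpow_one, mul_comm]

theorem rpow_tsum_le_mul_tsum_mul_tailSum_rpow (hs : 0 ≤ s) :
    (∑' i : U, a i) ^ (s + 1) ≤
      ENNReal.ofReal (s + 1) * ∑' k : U, a k * tailSum U a k ^ s := by
  rw [ENNReal.tsum_eq_iSup_sum, ← ENNReal.orderIsoRpow_apply (s + 1) (by linarith),
    OrderIso.map_iSup]
  refine iSup_le fun t => ?_
  calc (∑ i ∈ t, a i) ^ (s + 1)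
      ≤ ENNReal.ofReal (s + 1) * ∑ k ∈ t, a k * (∑ i ∈ t with k ≤ i, a i) ^ s :=
        t.rpow_sum_le_mul_sum_mul_rpow_tail (fun i => a i) hs
    _ ≤ ENNReal.ofReal (s + 1) * ∑ k ∈ t, a k * tailSum U a k ^ s := by
        gcongr with k; exact sum_filter_le_tailSum U a t k
    _ ≤ _ := by gcongr; exact ENNReal.sum_le_tsum t

theorem tailSum_sep_of_le {j k : α} (hjk : j ≤ k) :
    tailSum {i | i ∈ U ∧ j ≤ i} a k = tailSum U a k :=
  tsum_congr_set_coe a <| Set.ext fun _ =>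
    ⟨fun hi => ⟨hi.1.1, hi.2⟩, fun hi => ⟨⟨hi.1, hjk.trans hi.2⟩, hi.2⟩⟩

theorem tsum_sep_mul_tailSum_sep_rpow (j : α) :
    ∑' k : {k // k ∈ U ∧ j ≤ k}, a k * tailSum {i | i ∈ U ∧ j ≤ i} a k ^ s =
      ∑' k : {k // k ∈ U ∧ j ≤ k}, a k * tailSum U a k ^ s :=
  tsum_congr fun k => by rw [tailSum_sep_of_le U a k.2.2]

theorem tsum_sep_mul_tailSum_rpow_le (hs : 0 ≤ s) (j : α) :
    ∑' k : {k // k ∈ U ∧ j ≤ k}, a k * tailSum U a k ^ s ≤ tailSum U a j ^ (s + 1) := by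
  rw [← tsum_sep_mul_tailSum_sep_rpow]
  exact tsum_mul_tailSum_rpow_le {i | i ∈ U ∧ j ≤ i} a hs

theorem tailSum_rpow_le_mul_tsum_sep (hs : 0 ≤ s) (j : α) :
    tailSum U a j ^ (s + 1) ≤
      ENNReal.ofReal (s + 1) * ∑' k : {k // k ∈ U ∧ j ≤ k}, a k * tailSum U a k ^ s := by
  rw [← tsum_sep_mul_tailSum_sep_rpow]
  exact rpow_tsum_le_mul_tsum_mul_tailSum_rpow {i | i ∈ U ∧ j ≤ i} a hs

end TailSum

theorem tsum_subtype_and_eq_tsum_ite {α : Type*} (p q : α → Prop) [DecidablePred q]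
    (g : α → ℝ≥0∞) :
    ∑' j : {j // p j ∧ q j}, g j = ∑' j : {j // p j}, if q j then g j else 0 :=
  calc ∑' j : {j // p j ∧ q j}, g j = ∑' j : {j : {j // p j} // q j}, g j :=
        ((Equiv.subtypeSubtypeEquivSubtypeInter p q).tsum_eq (fun j => g j)).symm
    _ = ∑' j : {j // p j}, {j : {j // p j} | q j}.indicator (fun j => g j) j :=
        tsum_subtype {j : {j // p j} | q j} (fun j => g j)
    _ = ∑' j : {j // p j}, if q j then g j else 0 := by
        simp only [Set.indicator_apply, Set.mem_ofPred_eq]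

theorem tsum_mul_tsum_le_comm {α : Type*} [Preorder α] (p q : α → Prop)
    (f g : α → ℝ≥0∞) :
    ∑' k : {k // p k}, f k * ∑' j : {j // q j ∧ j ≤ k}, g j =
      ∑' j : {j // q j}, g j * ∑' k : {k // p k ∧ j ≤ k}, f k := by
  classical
  simp only [tsum_subtype_and_eq_tsum_ite, ← ENNReal.tsum_mul_left, mul_ite, mul_zero]
  rw [ENNReal.tsum_comm]
  simp only [mul_comm]

section ByParts

variable {S : Set ℤ} {b : ℤ → ℝ≥0∞}

theorem sum_Ioc_tsub_eq_tsub (hS : S.OrdConnected) (hb : MonotoneOn b S) {m k : ℤ} (hm : m ∈ S)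
    (hk : k ∈ S) (hmk : m ≤ k) : ∑ j ∈ Finset.Ioc m k, (b j - b (j - 1)) = b k - b m := by
  induction k, hmk using Int.leInduction with
  | base => simp
  | succ n hmn ih =>
    have hn : n ∈ S := hS.out hm hk ⟨hmn, by omega⟩
    rw [← Finset.insert_Ioc_right_eq_Ioc_add_one (by omega), Finset.sum_insert (by simp),
      ih hn, add_sub_cancel_right]
    exact tsub_add_tsub_cancel (hb hn hk (by omega)) (hb hm hn hmn)

theorem iInf_add_tsum_tsub_eq (hS : S.OrdConnected) (hb : MonotoneOn b S) {k : ℤ}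
    (hk : k ∈ S) :
    (⨅ m : S, b m) + ∑' j : {j // (j ∈ S ∧ j - 1 ∈ S) ∧ j ≤ k}, (b j - b (j - 1)) = b k := by
  classical
  have hIoc {m : ℤ} (hm : m ∈ S) {j : ℤ} (hj : j ∈ Finset.Ioc m k) :
      (j ∈ S ∧ j - 1 ∈ S) ∧ j ≤ k := by
    obtain ⟨hmj, hjk⟩ := Finset.mem_Ioc.1 hj
    exact ⟨⟨hS.out hm hk ⟨hmj.le, hjk⟩, hS.out hm hk ⟨by omega, by omega⟩⟩, hjk⟩
  refine le_antisymm ?_ ?_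
  · rw [ENNReal.tsum_eq_iSup_sum, ENNReal.add_iSup]
    refine iSup_le fun t => ?_
    rcases t.eq_empty_or_nonempty with rfl | ht
    · simpa using iInf_le (fun m : S => b m) ⟨k, hk⟩
    -- `t` lies in `Ioc (j₀ - 1) k` for its least element `j₀`; the increments telescope there
    obtain ⟨j₀, hj₀, hmin⟩ := t.exists_min_image Subtype.val ht
    have hm : j₀.1 - 1 ∈ S := j₀.2.1.2
    have hsub : t ⊆ (Finset.Ioc (j₀.1 - 1) k).subtype _ := fun j hjt =>
      Finset.mem_subtype.2 (Finset.mem_Ioc.2 ⟨by linarith [hmin j hjt], j.2.2⟩)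
    calc (⨅ m : S, b m) + ∑ j ∈ t, (b j - b (j - 1))
        ≤ b (j₀.1 - 1) + ∑ j ∈ Finset.Ioc (j₀.1 - 1) k, (b j - b (j - 1)) := by
          gcongr
          · exact iInf_le (fun m : S => b m) ⟨_, hm⟩
          · exact (Finset.sum_le_sum_of_subset hsub).trans_eq
              (Finset.sum_subtype_of_mem (fun j => b j - b (j - 1)) fun j => hIoc hm)
      _ = b k := by
          rw [sum_Ioc_tsub_eq_tsub hS hb hm hk (by linarith [j₀.2.2]),
            add_tsub_cancel_of_le (hb hm hk (by linarith [j₀.2.2]))]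
  · refine le_add_tsub.trans (add_le_add le_rfl ?_)
    rw [ENNReal.sub_iInf]
    refine iSup_le fun m => ?_
    rcases le_or_gt k m with hkm | hmk
    · simp [tsub_eq_zero_of_le (hb hk m.2 hkm)]
    rw [← sum_Ioc_tsub_eq_tsub hS hb m.2 hk hmk.le,
      ← Finset.sum_subtype_of_mem _ fun j => hIoc m.2]
    exact ENNReal.sum_le_tsum _

theorem tsum_mul_by_parts (hS : S.OrdConnected) (hb : MonotoneOn b S) (f : ℤ → ℝ≥0∞) :
    ∑' k : S, f k * b k = (∑' k : S, f k) * (⨅ k : S, b k) +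
      ∑' j : {j // j ∈ S ∧ j - 1 ∈ S},
        (b j - b (j - 1)) * ∑' k : {k // k ∈ S ∧ j ≤ k}, f k := by
  calc ∑' k : S, f k * b k
      = ∑' k : S, (f k * (⨅ m : S, b m) +
          f k * ∑' j : {j // (j ∈ S ∧ j - 1 ∈ S) ∧ j ≤ k}, (b j - b (j - 1))) := by
        refine tsum_congr fun k => ?_
        rw [← mul_add, iInf_add_tsum_tsub_eq hS hb k.2]
    _ = _ := by
        rw [ENNReal.tsum_add, ENNReal.tsum_mul_right]
        exact congrArg _ <| tsum_mul_tsum_le_comm (· ∈ S) (fun j => j ∈ S ∧ j - 1 ∈ S) f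
          (fun j => b j - b (j - 1))

end ByParts

section Comparison

variable {S : Set ℤ} (a : ℤ → ℝ≥0∞) {b : ℤ → ℝ≥0∞} {s : ℝ}

theorem tsum_mul_tailSum_rpow_mul_le (hs : 0 ≤ s) (hS : S.OrdConnected) (hb : MonotoneOn b S) :
    ∑' k : S, a k * tailSum S a k ^ s * b k ≤
      ∑' j : {j // j ∈ S ∧ j - 1 ∈ S}, (b j - b (j - 1)) * tailSum S a j ^ (s + 1) +
        (∑' k : S, a k) ^ (s + 1) * ⨅ k : S, b k := by
  rw [tsum_mul_by_parts hS hb (fun k => a k * tailSum S a k ^ s), add_comm]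
  gcongr with j
  · exact tsum_sep_mul_tailSum_rpow_le S a hs j
  · exact tsum_mul_tailSum_rpow_le S a hs

theorem le_mul_tsum_mul_tailSum_rpow_mul (hs : 0 ≤ s) (hS : S.OrdConnected)
    (hb : MonotoneOn b S) :
    ∑' j : {j // j ∈ S ∧ j - 1 ∈ S}, (b j - b (j - 1)) * tailSum S a j ^ (s + 1) +
        (∑' k : S, a k) ^ (s + 1) * ⨅ k : S, b k ≤
      ENNReal.ofReal (s + 1) * ∑' k : S, a k * tailSum S a k ^ s * b k := by
  rw [tsum_mul_by_parts hS hb (fun k => a k * tailSum S a k ^ s)]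
  calc _ ≤ ∑' j : {j // j ∈ S ∧ j - 1 ∈ S}, (b j - b (j - 1)) * (ENNReal.ofReal (s + 1) *
          ∑' k : {k // k ∈ S ∧ j ≤ k}, a k * tailSum S a k ^ s) +
        ENNReal.ofReal (s + 1) * (∑' k : S, a k * tailSum S a k ^ s) * ⨅ k : S, b k := by
        gcongr with j
        · exact tailSum_rpow_le_mul_tsum_sep S a hs j
        · exact rpow_tsum_le_mul_tsum_mul_tailSum_rpow S a hs
    _ = _ := by
        simp only [mul_left_comm _ (ENNReal.ofReal (s + 1)), ENNReal.tsum_mul_left]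
        ring

end Comparison

/-- For `s > 0`, non-negative `a` and a non-decreasing non-negative `b`,
`∑_k aₖ (∑_{i≥k} aᵢ)^s bₖ ≈ ∑_{k} (bₖ − b_{k−1}) (∑_{i≥k} aᵢ)^{s+1} + (∑_k aₖ)^{s+1} b_N`,
with constants depending only on `s` (here `b_N` is the infimum of `b` over the index set). -/
theorem stmt5 (s : ℝ) (hs : 0 < s) :
    ∃ C : ℝ≥0∞, 0 < C ∧ C ≠ ⊤ ∧
      ∀ (S : Set ℤ) (a b : ℤ → ℝ≥0∞),
        (∀ ⦃j k l : ℤ⦄, j ∈ S → l ∈ S → j ≤ k → k ≤ l → k ∈ S) →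
        (∀ k ∈ S, a k ≠ ⊤) →
        (∀ k ∈ S, b k ≠ ⊤) →
        (∀ j ∈ S, ∀ k ∈ S, j ≤ k → b j ≤ b k) →
        (∑' k : S, a k.1 * (∑' i : {i : ℤ // i ∈ S ∧ k.1 ≤ i}, a i.1) ^ s * b k.1)
            ≤ C * ((∑' k : {k : ℤ // k ∈ S ∧ k - 1 ∈ S},
                (b k.1 - b (k.1 - 1)) * (∑' i : {i : ℤ // i ∈ S ∧ k.1 ≤ i}, a i.1) ^ (s + 1))
              + (∑' k : S, a k.1) ^ (s + 1) * ⨅ k : S, b k.1) ∧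
        ((∑' k : {k : ℤ // k ∈ S ∧ k - 1 ∈ S},
            (b k.1 - b (k.1 - 1)) * (∑' i : {i : ℤ // i ∈ S ∧ k.1 ≤ i}, a i.1) ^ (s + 1))
          + (∑' k : S, a k.1) ^ (s + 1) * ⨅ k : S, b k.1)
            ≤ C * ∑' k : S, a k.1 * (∑' i : {i : ℤ // i ∈ S ∧ k.1 ≤ i}, a i.1) ^ s * b k.1 := by
  have hc : 1 ≤ ENNReal.ofReal (s + 1) := ENNReal.one_le_ofReal.2 (by linarith)
  refine ⟨ENNReal.ofReal (s + 1), one_pos.trans_le hc, ENNReal.ofReal_ne_top, ?_⟩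
  intro S a b hconv _ _ hmono
  have hS : S.OrdConnected := ⟨fun j hj l hl k hk => hconv hj hl hk.1 hk.2⟩
  have hb : MonotoneOn b S := fun j hj k hk => hmono j hj k hk
  exact ⟨(tsum_mul_tailSum_rpow_mul_le a hs.le hS hb).trans (le_mul_of_one_le_left' hc),
    le_mul_tsum_mul_tailSum_rpow_mul a hs.le hS hb⟩
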